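/- Let P_S and P_T be domains on ℝ^d × {−1,1} such that x ≠ 0 almost surely under both marginals, let D_T be the marginal of P_T on ℝ^d, and let A ⊆ ℝ^d × {−1,1} be a measurable set with P_S(Aᶜ) = 0 such that the restriction of P_T to A is absolutely continuous with respect to P_S with density ρ; let β_∞ be the P_S-essential supremum of ρ and η_{T∖S} = P_T(Aᶜ)·sup_{w'∈ℝ^d} R_{T∖S}(h_{w'}) (zero when P_T(Aᶜ)=0), where T∖S is the conditional of P_T given Aᶜ. For w ∈ ℝ^d, suppose D_T({x : w·x = 0}) = 0 and P_S({(x,y) : w·x = 0}) = 0. Then: R_{P_T}(h_w) ≤ d_{D_T}(Q_w) + 2·β_∞·e_{P_S}(Q_w) + 2·η_{T∖S}, where d_{D_T}(Q_w) = E_{x∼D_T} P_{(w',w'')∼N(w,I_d)⊗N(w,I_d)}( sgn(w'·x) ≠ sgn(w''·x) ) and e_{P_S}(Q_w) = E_{(x,y)∼P_S} P_{(w',w'')∼N(w,I_d)⊗N(w,I_d)}( sgn(w'·x) ≠ y and sgn(w''·x) ≠ y ). -/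

import Mathlib

/-!
STATEMENT 6: Domain adaptation bound specialized to linear classifiers
(Corollary 7 of the paper).  `ℝ^d` is `Fin d → ℝ`; `Y = {-1,1}` is `Bool`
(`true ↔ +1`, `false ↔ -1`); `h_w(x) = sgn(w·x)` is `linSgn (dot w x)` with the
(immaterial) convention `sgn 0 = -1`; the Gaussian posterior `Q_w = N(w, I_d)`
is the product of one-dimensional unit-variance Gaussians.
-/

open MeasureTheory ProbabilityTheory Real
open scoped ENNReal Classical

noncomputable section

/-- Dot product on `ℝ^d`. -/
def dot {d : ℕ} (w x : Fin d → ℝ) : ℝ := ∑ i, w i * x i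

/-- Sign, as a Boolean label (`true ↔ +1`). -/
def linSgn (t : ℝ) : Bool := decide (0 < t)

/-- The Gaussian measure `N(w, I_d)` on `ℝ^d`. -/
def gaussPi {d : ℕ} (w : Fin d → ℝ) : Measure (Fin d → ℝ) :=
  Measure.pi fun i => gaussianReal (w i) 1

/-!
At a point `x` where at least half of the mass of the posterior `Q` votes against the label `y`,
the disagreement plus twice the joint error of two independent votes is at least `1`.
Integrating over `P_T` bounds the risk of any classifier that errs only where the majority vote
does; the `P_T`-integral of the joint error then splits along `A` into a part dominated by `β_∞`
times its `P_S`-integral and a part bounded by `P_T(Aᶜ)` times the worst risk on `T ∖ S`.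
For the Gaussian posterior `N(w, I_d)` the reflection `v ↦ 2w - v` preserves the posterior and
maps every vote against `h_w(x)` to a vote for it, so the majority vote is `h_w` wherever
`w · x ≠ 0`.
-/

open Function

section MajorityVote

variable {Θ X : Type*} [MeasurableSpace Θ]

def disagreement (Q : Measure Θ) (h : Θ → X → Bool) (x : X) : ℝ≥0∞ :=
  (Q.prod Q) {p | h p.1 x ≠ h p.2 x}

def jointError (Q : Measure Θ) (h : Θ → X → Bool) (z : X × Bool) : ℝ≥0∞ :=
  (Q.prod Q) {p | h p.1 z.1 ≠ z.2 ∧ h p.2 z.1 ≠ z.2}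

variable (Q : Measure Θ) [IsProbabilityMeasure Q] {h : Θ → X → Bool}

variable (h) in
theorem one_le_disagreement_add_two_mul_jointError {x : X} {y : Bool}
    (hmaj : Q {θ | h θ x = y} ≤ Q {θ | h θ x ≠ y}) :
    1 ≤ disagreement Q h x + 2 * jointError Q h (x, y) := by
  set B := {θ | h θ x ≠ y}
  have hjoint : jointError Q h (x, y) = (Q.prod Q) (B ×ˢ B) := rfl
  have hcover : Set.univ ⊆ {p : Θ × Θ | h p.1 x ≠ h p.2 x} ∪ (B ×ˢ B ∪ Bᶜ ×ˢ Bᶜ) := by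
    rintro ⟨θ₁, θ₂⟩ -
    simp only [B, Set.mem_union, Set.mem_prod, Set.mem_compl_iff, Set.mem_ofPred_eq]
    cases h θ₁ x <;> cases h θ₂ x <;> cases y <;> simp
  have hlight : (Q.prod Q) (Bᶜ ×ˢ Bᶜ) ≤ (Q.prod Q) (B ×ˢ B) := by
    have hB : Q Bᶜ ≤ Q B := by simpa [B, Set.compl_ofPred] using hmaj
    rw [Measure.prod_prod, Measure.prod_prod]
    exact mul_le_mul' hB hB
  calc 1 = (Q.prod Q) Set.univ := measure_univ.symm
    _ ≤ disagreement Q h x + ((Q.prod Q) (B ×ˢ B) + (Q.prod Q) (Bᶜ ×ˢ Bᶜ)) :=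
      (measure_mono hcover).trans <|
        (measure_union_le _ _).trans (add_le_add le_rfl (measure_union_le _ _))
    _ ≤ disagreement Q h x + 2 * jointError Q h (x, y) := by
      rw [hjoint, two_mul]
      gcongr

variable (h) in
theorem jointError_le (z : X × Bool) : jointError Q h z ≤ Q {θ | h θ z.1 ≠ z.2} :=
  calc jointError Q h z ≤ (Q.prod Q) ({θ | h θ z.1 ≠ z.2} ×ˢ Set.univ) :=
        measure_mono fun _ hp => ⟨hp.1, trivial⟩
    _ = Q {θ | h θ z.1 ≠ z.2} := by rw [Measure.prod_prod, measure_univ, mul_one]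

variable [MeasurableSpace X]

theorem measurable_disagreement (hh : Measurable (uncurry h)) :
    Measurable (disagreement Q h) := by
  have h₁ : Measurable fun q : X × Θ × Θ => h q.2.1 q.1 :=
    hh.comp (measurable_snd.fst.prodMk measurable_fst)
  have h₂ : Measurable fun q : X × Θ × Θ => h q.2.2 q.1 :=
    hh.comp (measurable_snd.snd.prodMk measurable_fst)
  exact measurable_measure_prodMk_left
    ((h₁.prodMk h₂) (MeasurableSet.of_discrete (s := {b : Bool × Bool | b.1 ≠ b.2})))

theorem measurable_jointError (hh : Measurable (uncurry h)) :
    Measurable (jointError Q h) := by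
  have h₁ : Measurable fun q : (X × Bool) × Θ × Θ => h q.2.1 q.1.1 :=
    hh.comp (measurable_snd.fst.prodMk measurable_fst.fst)
  have h₂ : Measurable fun q : (X × Bool) × Θ × Θ => h q.2.2 q.1.1 :=
    hh.comp (measurable_snd.snd.prodMk measurable_fst.fst)
  exact measurable_measure_prodMk_left ((h₁.prodMk (h₂.prodMk measurable_fst.snd))
    (MeasurableSet.of_discrete (s := {b : Bool × Bool × Bool | b.1 ≠ b.2.2 ∧ b.2.1 ≠ b.2.2})))

theorem measure_error_le_lintegral_disagreement_add (hh : Measurable (uncurry h))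
    (P : Measure (X × Bool)) (g : X → Bool)
    (hmaj : ∀ᵐ z ∂P, g z.1 ≠ z.2 → Q {θ | h θ z.1 = z.2} ≤ Q {θ | h θ z.1 ≠ z.2}) :
    P {z | g z.1 ≠ z.2} ≤
      ∫⁻ x, disagreement Q h x ∂(P.map Prod.fst) + 2 * ∫⁻ z, jointError Q h z ∂P := by
  have hD := measurable_disagreement Q hh
  have hE := measurable_jointError Q hh
  calc P {z | g z.1 ≠ z.2} ≤ P {z | 1 ≤ disagreement Q h z.1 + 2 * jointError Q h z} :=
        measure_mono_ae <| hmaj.mono fun z hz hz' =>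
          one_le_disagreement_add_two_mul_jointError Q h (hz hz')
    _ ≤ ∫⁻ z, disagreement Q h z.1 + 2 * jointError Q h z ∂P := by
      simpa using mul_meas_ge_le_lintegral₀ ((hD.comp measurable_fst).add
        (hE.const_mul 2)).aemeasurable 1
    _ = _ := by
      rw [lintegral_add_right _ (hE.const_mul 2), lintegral_map hD measurable_fst,
        lintegral_const_mul 2 hE]

theorem lintegral_jointError_le_iSup (hh : Measurable (uncurry h))
    (C : Measure (X × Bool)) [SFinite C] :
    ∫⁻ z, jointError Q h z ∂C ≤ ⨆ θ, C {z | h θ z.1 ≠ z.2} := by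
  have hE : MeasurableSet {q : (X × Bool) × Θ | h q.2 q.1.1 ≠ q.1.2} :=
    ((hh.comp (measurable_snd.prodMk measurable_fst.fst)).prodMk measurable_fst.snd)
      (MeasurableSet.of_discrete (s := {b : Bool × Bool | b.1 ≠ b.2}))
  calc ∫⁻ z, jointError Q h z ∂C ≤ ∫⁻ z, Q {θ | h θ z.1 ≠ z.2} ∂C :=
        lintegral_mono (jointError_le Q h)
    _ = ∫⁻ θ, C {z | h θ z.1 ≠ z.2} ∂Q :=
        (Measure.prod_apply hE).symm.trans (Measure.prod_apply_symm hE)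
    _ ≤ ∫⁻ _, ⨆ θ, C {z | h θ z.1 ≠ z.2} ∂Q :=
        lintegral_mono fun θ => le_iSup (fun θ => C {z | h θ z.1 ≠ z.2}) θ
    _ = ⨆ θ, C {z | h θ z.1 ≠ z.2} := by simp

end MajorityVote

section ChangeOfDomain

variable {α : Type*} [MeasurableSpace α]

theorem restrict_eq_measure_smul_cond (μ : Measure α) [IsFiniteMeasure μ] (s : Set α) :
    μ.restrict s = μ s • μ[|s] := by
  rcases eq_or_ne (μ s) 0 with hs | hs
  · simp [Measure.restrict_eq_zero.2 hs, hs]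
  · rw [ProbabilityTheory.cond, smul_smul, ENNReal.mul_inv_cancel hs (measure_ne_top μ s), one_smul]

theorem lintegral_le_essSup_mul_add_measure_compl_mul {PS PT : Measure α} [IsFiniteMeasure PT]
    {A : Set α} (hA : MeasurableSet A) {ρ : α → ℝ≥0∞}
    (hdens : PT.restrict A = PS.withDensity ρ) (f : α → ℝ≥0∞) :
    ∫⁻ z, f z ∂PT ≤ essSup ρ PS * ∫⁻ z, f z ∂PS + PT Aᶜ * ∫⁻ z, f z ∂PT[|Aᶜ] := by
  have hdom : PT ≤ essSup ρ PS • PS + PT Aᶜ • PT[|Aᶜ] := by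
    calc PT = PT.restrict A + PT.restrict Aᶜ := (Measure.restrict_add_restrict_compl hA).symm
      _ = PS.withDensity ρ + PT Aᶜ • PT[|Aᶜ] := by rw [hdens, restrict_eq_measure_smul_cond]
      _ ≤ PS.withDensity (fun _ => essSup ρ PS) + PT Aᶜ • PT[|Aᶜ] :=
        add_le_add (withDensity_mono (ENNReal.ae_le_essSup ρ)) le_rfl
      _ = essSup ρ PS • PS + PT Aᶜ • PT[|Aᶜ] := by rw [withDensity_const]
  calc ∫⁻ z, f z ∂PT ≤ ∫⁻ z, f z ∂(essSup ρ PS • PS + PT Aᶜ • PT[|Aᶜ]) :=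
        lintegral_mono' hdom le_rfl
    _ = _ := by rw [lintegral_add_measure, lintegral_smul_measure, lintegral_smul_measure]; rfl

theorem ofReal_integral_toReal_eq_lintegral {μ : Measure α} [IsFiniteMeasure μ]
    {f : α → ℝ≥0∞} (hf : AEMeasurable f μ) (hf1 : ∀ x, f x ≤ 1) :
    ENNReal.ofReal (∫ x, (f x).toReal ∂μ) = ∫⁻ x, f x ∂μ := by
  rw [integral_toReal hf (ae_of_all _ fun x => (hf1 x).trans_lt ENNReal.one_lt_top)]
  refine ENNReal.ofReal_toReal (ne_top_of_le_ne_top (measure_ne_top μ Set.univ) ?_)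
  simpa using lintegral_mono hf1

end ChangeOfDomain

theorem ENNReal.ofReal_iSup_toReal {ι : Sort*} {f : ι → ℝ≥0∞} (hf : ∀ i, f i ≤ 1) :
    ENNReal.ofReal (⨆ i, (f i).toReal) = ⨆ i, f i := by
  rw [← ENNReal.toReal_iSup fun i => ((hf i).trans_lt ENNReal.one_lt_top).ne,
    ENNReal.ofReal_toReal (ne_top_of_le_ne_top ENNReal.one_ne_top (iSup_le hf : iSup f ≤ 1))]

section Gaussian

variable {d : ℕ}

theorem measurable_linSgn : Measurable linSgn :=
  measurable_to_bool <| by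
    convert measurableSet_Ioi (a := (0 : ℝ))
    ext; simp [linSgn]

theorem measurable_linSgn_dot :
    Measurable (uncurry fun v x : Fin d → ℝ => linSgn (dot v x)) :=
  measurable_linSgn.comp (by unfold dot; fun_prop)

instance (w : Fin d → ℝ) : IsProbabilityMeasure (gaussPi w) := by
  unfold gaussPi; infer_instance

theorem measurePreserving_gaussianReal_reflect (μ : ℝ) (v : NNReal) :
    MeasurePreserving (fun t => 2 * μ - t) (gaussianReal μ v) (gaussianReal μ v) :=
  ⟨by fun_prop, by rw [gaussianReal_map_const_sub]; ring_nf⟩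

theorem measurePreserving_gaussPi_reflect (w : Fin d → ℝ) :
    MeasurePreserving (fun v i => 2 * w i - v i) (gaussPi w) (gaussPi w) :=
  measurePreserving_pi _ _ fun i => measurePreserving_gaussianReal_reflect (w i) 1

theorem dot_two_mul_sub (w v x : Fin d → ℝ) :
    dot (fun i => 2 * w i - v i) x = 2 * dot w x - dot v x := by
  simp [dot, Finset.mul_sum, sub_mul, mul_assoc]

theorem linSgn_two_mul_sub {c t : ℝ} (hc : c ≠ 0) (ht : linSgn t ≠ linSgn c) :
    linSgn (2 * c - t) = linSgn c := by
  rcases hc.lt_or_gt with hc | hc <;> simp [linSgn] at * <;> grind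

theorem gaussPi_linSgn_eq_le_linSgn_ne (w x : Fin d → ℝ) (hx : dot w x ≠ 0) {y : Bool}
    (hy : linSgn (dot w x) ≠ y) :
    gaussPi w {v | linSgn (dot v x) = y} ≤ gaussPi w {v | linSgn (dot v x) ≠ y} := by
  have hmeas : MeasurableSet {v : Fin d → ℝ | linSgn (dot v x) ≠ y} :=
    (measurable_linSgn_dot.comp (measurable_id.prodMk measurable_const))
      (MeasurableSet.of_discrete (s := {b : Bool | b ≠ y}))
  calc gaussPi w {v | linSgn (dot v x) = y}
      ≤ gaussPi w ((fun v i => 2 * w i - v i) ⁻¹' {v | linSgn (dot v x) ≠ y}) := by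
        refine measure_mono fun v (hv : linSgn (dot v x) = y) => ?_
        change linSgn (dot (fun i => 2 * w i - v i) x) ≠ y
        rw [dot_two_mul_sub, linSgn_two_mul_sub hx (hv ▸ hy.symm)]
        exact hy
    _ = gaussPi w {v | linSgn (dot v x) ≠ y} :=
        (measurePreserving_gaussPi_reflect w).measure_preimage hmeas.nullMeasurableSet

end Gaussian

theorem domain_adaptation_bound_linear_general
    {d : ℕ}
    (PS PT : Measure ((Fin d → ℝ) × Bool)) [IsProbabilityMeasure PS] [IsProbabilityMeasure PT]
    (A : Set ((Fin d → ℝ) × Bool)) (hA : MeasurableSet A)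
    (ρ : (Fin d → ℝ) × Bool → ℝ≥0∞)
    (hdens : PT.restrict A = PS.withDensity ρ)
    (w : Fin d → ℝ)
    (hwT : (PT.map Prod.fst) {x | dot w x = 0} = 0) :
    -- R_{P_T}(h_w) ≤ d_{D_T}(Q_w) + 2 β_∞ e_{P_S}(Q_w) + 2 η_{T∖S}
    ENNReal.ofReal (PT {z | linSgn (dot w z.1) ≠ z.2}).toReal
      ≤ ENNReal.ofReal (∫ x, (((gaussPi w).prod (gaussPi w))
            {p | linSgn (dot p.1 x) ≠ linSgn (dot p.2 x)}).toReal ∂(PT.map Prod.fst))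
        + 2 * essSup ρ PS
            * ENNReal.ofReal (∫ z, (((gaussPi w).prod (gaussPi w))
                {p | linSgn (dot p.1 z.1) ≠ z.2 ∧ linSgn (dot p.2 z.1) ≠ z.2}).toReal ∂PS)
        + ENNReal.ofReal (2 * ((PT Aᶜ).toReal *
            ⨆ w' : Fin d → ℝ, ((PT[|Aᶜ]) {z | linSgn (dot w' z.1) ≠ z.2}).toReal)) := by
  set Q := gaussPi w
  set h : (Fin d → ℝ) → (Fin d → ℝ) → Bool := fun v x => linSgn (dot v x)
  have hh : Measurable (uncurry h) := measurable_linSgn_dot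
  have hmaj : ∀ᵐ z ∂PT, linSgn (dot w z.1) ≠ z.2 →
      Q {v | h v z.1 = z.2} ≤ Q {v | h v z.1 ≠ z.2} := by
    have hw : ∀ᵐ x ∂PT.map Prod.fst, dot w x ≠ 0 := by simpa [ae_iff] using hwT
    filter_upwards [ae_of_ae_map measurable_fst.aemeasurable hw] with z hz
    exact gaussPi_linSgn_eq_le_linSgn_ne w z.1 hz
  have hrisk := measure_error_le_lintegral_disagreement_add Q hh PT (h w) hmaj
  have hdom := lintegral_le_essSup_mul_add_measure_compl_mul hA hdens (jointError Q h)
  have htail := lintegral_jointError_le_iSup Q hh PT[|Aᶜ]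
  calc ENNReal.ofReal (PT {z | linSgn (dot w z.1) ≠ z.2}).toReal
      = PT {z | linSgn (dot w z.1) ≠ z.2} := ENNReal.ofReal_toReal (measure_ne_top _ _)
    _ ≤ ∫⁻ x, disagreement Q h x ∂(PT.map Prod.fst) + 2 * essSup ρ PS * ∫⁻ z, jointError Q h z ∂PS
        + 2 * (PT Aᶜ * ⨆ w', PT[|Aᶜ] {z | h w' z.1 ≠ z.2}) := by
      refine hrisk.trans ?_
      rw [mul_assoc, add_assoc, ← mul_add]
      gcongr
      exact hdom.trans (add_le_add le_rfl (mul_le_mul_right htail _))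
    _ = _ := by
      rw [← ofReal_integral_toReal_eq_lintegral (measurable_disagreement Q hh).aemeasurable
          fun _ => prob_le_one,
        ← ofReal_integral_toReal_eq_lintegral (measurable_jointError Q hh).aemeasurable
          fun _ => prob_le_one,
        ← ENNReal.ofReal_iSup_toReal fun _ => prob_le_one, ENNReal.ofReal_mul zero_le_two,
        ENNReal.ofReal_mul ENNReal.toReal_nonneg, ENNReal.ofReal_toReal (measure_ne_top _ _),
        ENNReal.ofReal_ofNat]
      rfl

theorem domain_adaptation_bound_linear
    {d : ℕ}
    (PS PT : Measure ((Fin d → ℝ) × Bool)) [IsProbabilityMeasure PS] [IsProbabilityMeasure PT]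
    (hS0 : ∀ᵐ z ∂PS, z.1 ≠ 0) (hT0 : ∀ᵐ z ∂PT, z.1 ≠ 0)
    (A : Set ((Fin d → ℝ) × Bool)) (hA : MeasurableSet A) (hSA : PS Aᶜ = 0)
    (ρ : (Fin d → ℝ) × Bool → ℝ≥0∞) (hρ : Measurable ρ)
    (hdens : PT.restrict A = PS.withDensity ρ)
    (w : Fin d → ℝ)
    (hwT : (PT.map Prod.fst) {x | dot w x = 0} = 0)
    (hwS : PS {z | dot w z.1 = 0} = 0) :
    -- R_{P_T}(h_w) ≤ d_{D_T}(Q_w) + 2 β_∞ e_{P_S}(Q_w) + 2 η_{T∖S}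
    ENNReal.ofReal (PT {z | linSgn (dot w z.1) ≠ z.2}).toReal
      ≤ ENNReal.ofReal (∫ x, (((gaussPi w).prod (gaussPi w))
            {p | linSgn (dot p.1 x) ≠ linSgn (dot p.2 x)}).toReal ∂(PT.map Prod.fst))
        + 2 * essSup ρ PS
            * ENNReal.ofReal (∫ z, (((gaussPi w).prod (gaussPi w))
                {p | linSgn (dot p.1 z.1) ≠ z.2 ∧ linSgn (dot p.2 z.1) ≠ z.2}).toReal ∂PS)
        + ENNReal.ofReal (2 * ((PT Aᶜ).toReal *
            ⨆ w' : Fin d → ℝ, ((PT[|Aᶜ]) {z | linSgn (dot w' z.1) ≠ z.2}).toReal)) :=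
  domain_adaptation_bound_linear_general PS PT A hA ρ hdens w hwT
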